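/- Let F : ℝⁿ → S^ℓ be an affine linear matrix map and u, v ∈ ℝⁿ. Then (F(u) − F(v))² ⪯ λ_max(H) ‖u − v‖² I_ℓ, where H = M Mᵀ with M the vertical stack of the coefficient matrices F₁,...,Fₙ. -/

import Mathlib

/-! With `w = u - v` and `W = w ⊗ I_ℓ`, the difference `F(u) - F(v) = Σ wᵢ Fᵢ` factors as `Wᵀ M`,
and `Wᵀ W = ‖w‖² I`. As `F(u) - F(v)` is symmetric, its square is `Wᵀ M Mᵀ W = Wᵀ H W`, and the
congruence `X ↦ Wᵀ X W` carries `H ⪯ λ_max(H) I` to `Wᵀ H W ⪯ λ_max(H) ‖w‖² I`. -/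

open Matrix

/-- The vertical stack of matrices `F 1, ..., F n` into an `ℓn × ℓ` matrix. -/
def vstack {n ℓ : ℕ} (F : Fin n → Matrix (Fin ℓ) (Fin ℓ) ℝ) :
    Matrix (Fin n × Fin ℓ) (Fin ℓ) ℝ :=
  Matrix.of fun p b => F p.1 p.2 b

/-- The Euclidean norm of a vector `w ∈ ℝⁿ`. -/
noncomputable def enorm' {n : ℕ} (w : Fin n → ℝ) : ℝ :=
  ‖(WithLp.equiv 2 (Fin n → ℝ)).symm w‖

namespace Matrix

open scoped ComplexOrder in
lemma IsHermitian.posSemidef_smul_one_sub {𝕜 m : Type*} [RCLike 𝕜] [Fintype m]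
    [DecidableEq m] {A : Matrix m m 𝕜} (hA : A.IsHermitian) {c : ℝ}
    (hc : ∀ i, hA.eigenvalues i ≤ c) : (c • (1 : Matrix m m 𝕜) - A).PosSemidef := by
  open scoped MatrixOrder in
  have hle : A ≤ algebraMap ℝ (Matrix m m 𝕜) c := by
    refine le_algebraMap_of_spectrum_le (fun x hx => ?_) hA.isSelfAdjoint
    rw [hA.spectrum_real_eq_range_eigenvalues] at hx
    obtain ⟨i, rfl⟩ := hx
    exact hc i
  rwa [le_iff, Algebra.algebraMap_eq_smul_one] at hle

open scoped ComplexOrder in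
lemma posSemidef_smul_one_sub_mul_self {𝕜 k m : Type*} [RCLike 𝕜] [Fintype k]
    [DecidableEq k] [Fintype m] [DecidableEq m] {W M : Matrix k m 𝕜}
    (hD : (Wᴴ * M).IsHermitian) {s : ℝ} (hW : Wᴴ * W = s • (1 : Matrix m m 𝕜))
    {H : Matrix k k 𝕜} (hH : H = M * Mᴴ) (hHherm : H.IsHermitian) {c : ℝ}
    (hc : ∀ i, hHherm.eigenvalues i ≤ c) :
    ((c * s) • (1 : Matrix m m 𝕜) - (Wᴴ * M) * (Wᴴ * M)).PosSemidef := by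
  subst hH
  have hsq : (Wᴴ * M) * (Wᴴ * M) = Wᴴ * (M * Mᴴ) * W := by
    conv_lhs => arg 2; rw [← hD.eq]
    simp only [conjTranspose_mul, conjTranspose_conjTranspose, Matrix.mul_assoc]
  have hcongr : (c * s) • (1 : Matrix m m 𝕜) - (Wᴴ * M) * (Wᴴ * M)
      = Wᴴ * (c • (1 : Matrix k k 𝕜) - M * Mᴴ) * W := by
    rw [hsq, Matrix.mul_sub, Matrix.sub_mul, Matrix.mul_smul, Matrix.mul_one, Matrix.smul_mul,
      hW, smul_smul]
  rw [hcongr]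
  exact (hHherm.posSemidef_smul_one_sub hc).conjTranspose_mul_mul_same W

/-- `w ⊗ I_m`, indexed by `ι × m` rather than by `(ι × Unit) × (Unit × m)` as with `kronecker`. -/
def vecKronOne {ι R : Type*} [Zero R] [One R] [Mul R] (w : ι → R) (m : Type*) [DecidableEq m] :
    Matrix (ι × m) m R :=
  of fun p b => w p.1 * (1 : Matrix m m R) p.2 b

lemma vecKronOne_transpose_mul_self {ι m R : Type*} [Fintype ι] [Fintype m] [DecidableEq m]
    [CommSemiring R] (w : ι → R) :
    (vecKronOne w m)ᵀ * vecKronOne w m = (∑ i, w i ^ 2) • (1 : Matrix m m R) := by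
  ext a b
  by_cases hab : a = b
  · subst hab
    simp [vecKronOne, mul_apply, Fintype.sum_prod_type, one_apply, sq]
  · simp [vecKronOne, mul_apply, Fintype.sum_prod_type, one_apply, hab, Ne.symm hab]

end Matrix

lemma vecKronOne_transpose_mul_vstack {n ℓ : ℕ} (w : Fin n → ℝ)
    (F : Fin n → Matrix (Fin ℓ) (Fin ℓ) ℝ) :
    (vecKronOne w (Fin ℓ))ᵀ * vstack F = ∑ i, w i • F i := by
  ext a b
  simp [vecKronOne, vstack, mul_apply, Fintype.sum_prod_type, one_apply, Matrix.sum_apply]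

lemma enorm'_sq {n : ℕ} (w : Fin n → ℝ) : enorm' w ^ 2 = ∑ i, w i ^ 2 := by
  simp [enorm', EuclideanSpace.norm_sq_eq]

theorem sq_diff_le_lammax_general {n ℓ : ℕ}
    (F₀ : Matrix (Fin ℓ) (Fin ℓ) ℝ) (F : Fin n → Matrix (Fin ℓ) (Fin ℓ) ℝ)
    (hF : ∀ i, (F i).IsSymm)
    (Fmap : (Fin n → ℝ) → Matrix (Fin ℓ) (Fin ℓ) ℝ)
    (hFmap : ∀ x, Fmap x = F₀ + ∑ i, x i • F i)
    (H : Matrix (Fin n × Fin ℓ) (Fin n × Fin ℓ) ℝ)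
    (hH : H = vstack F * (vstack F)ᵀ) (hHherm : H.IsHermitian)
    (u v : Fin n → ℝ) :
    Matrix.PosSemidef
      (((⨆ i, hHherm.eigenvalues i) * (enorm' (u - v)) ^ 2) • (1 : Matrix (Fin ℓ) (Fin ℓ) ℝ)
        - (Fmap u - Fmap v) * (Fmap u - Fmap v)) := by
  set W := vecKronOne (u - v) (Fin ℓ)
  have hdiff : Fmap u - Fmap v = ∑ i, (u - v) i • F i := by
    simp only [hFmap, add_sub_add_left_eq_sub, ← Finset.sum_sub_distrib, Pi.sub_apply, sub_smul]
  have hD : Fmap u - Fmap v = Wᴴ * vstack F := by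
    rw [conjTranspose_eq_transpose_of_trivial, vecKronOne_transpose_mul_vstack, hdiff]
  have hDsymm : (Fmap u - Fmap v).IsHermitian := by
    rw [isHermitian_iff_isSymm, hdiff, IsSymm, transpose_sum]
    exact Finset.sum_congr rfl fun i _ => ((hF i).smul _).eq
  have hW : Wᴴ * W = enorm' (u - v) ^ 2 • (1 : Matrix (Fin ℓ) (Fin ℓ) ℝ) := by
    rw [conjTranspose_eq_transpose_of_trivial, vecKronOne_transpose_mul_self, enorm'_sq]
  rw [hD] at hDsymm ⊢
  exact posSemidef_smul_one_sub_mul_self hDsymm hW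
    (hH.trans (by rw [conjTranspose_eq_transpose_of_trivial])) hHherm
    fun i => le_ciSup (Set.finite_range _).bddAbove i

/-- for the affine map `F(x) = F₀ + Σᵢ xᵢ Fᵢ`,
`(F(u) − F(v))² ⪯ λ_max(H) ‖u − v‖² I_ℓ` where `H = M Mᵀ` with `M` the vertical stack
of the coefficient matrices. -/
theorem sq_diff_le_lammax {n ℓ : ℕ}
    (F₀ : Matrix (Fin ℓ) (Fin ℓ) ℝ) (F : Fin n → Matrix (Fin ℓ) (Fin ℓ) ℝ)
    (hF₀ : F₀.IsSymm) (hF : ∀ i, (F i).IsSymm)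
    (Fmap : (Fin n → ℝ) → Matrix (Fin ℓ) (Fin ℓ) ℝ)
    (hFmap : ∀ x, Fmap x = F₀ + ∑ i, x i • F i)
    (H : Matrix (Fin n × Fin ℓ) (Fin n × Fin ℓ) ℝ)
    (hH : H = vstack F * (vstack F)ᵀ) (hHherm : H.IsHermitian)
    (u v : Fin n → ℝ) :
    Matrix.PosSemidef
      (((⨆ i, hHherm.eigenvalues i) * (enorm' (u - v)) ^ 2) • (1 : Matrix (Fin ℓ) (Fin ℓ) ℝ)
        - (Fmap u - Fmap v) * (Fmap u - Fmap v)) :=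
  sq_diff_le_lammax_general F₀ F hF Fmap hFmap H hH hHherm u v
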